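/- For real-valued kernels κ, κ' on [0,1]² taking values in R^Ω (Ω finite), define symmetric functions κ^(ω) on [0,1]² by κ^(ω)_{s/2,(1+x)/2} = κ_{s,x}(ω), κ^(ω)_{(1+s)/2,x/2} = κ_{x,s}(ω), and κ^(ω) = 0 on [0,1/2)² and [1/2,1]². Then D_⧠(κ, κ') = 2 · max_{ω∈Ω} D_⧠(κ^(ω), κ'^(ω)), where D_⧠ denotes the cut distance without any measure-preserving transformations. -/
import Mathlib


open scoped BigOperators
open MeasureTheory

/-- The cut distance (without measure-preserving transformations) between two
`ℝ^Ω`-valued kernels on `[0,1]²`. -/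
noncomputable def cutFK {Ω : Type*} [Fintype Ω] (κ κ' : ℝ → ℝ → Ω → ℝ) : ℝ :=
  sSup { d | ∃ S X : Set ℝ, MeasurableSet S ∧ MeasurableSet X ∧
    S ⊆ Set.Icc 0 1 ∧ X ⊆ Set.Icc 0 1 ∧ ∃ ω : Ω,
    d = |∫ s in S, (∫ x in X, (κ s x ω - κ' s x ω))| }

/-- The cut distance (without measure-preserving transformations) between two
real-valued kernels on `[0,1]²`. -/
noncomputable def cutFKR (W W' : ℝ → ℝ → ℝ) : ℝ :=
  sSup { d | ∃ S X : Set ℝ, MeasurableSet S ∧ MeasurableSet X ∧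
    S ⊆ Set.Icc 0 1 ∧ X ⊆ Set.Icc 0 1 ∧
    d = |∫ s in S, (∫ x in X, (W s x - W' s x))| }

/-- The symmetric 'bipartite' function `κ^(ω)` on `[0,1]²` associated with a kernel:
`κ^(ω)_{s/2,(1+x)/2} = κ_{s,x}(ω)`, `κ^(ω)_{(1+s)/2,x/2} = κ_{x,s}(ω)`, and
`κ^(ω) = 0` on `[0,1/2)²` and `[1/2,1]²`. -/
noncomputable def bip {Ω : Type*} (κ : ℝ → ℝ → Ω → ℝ) (ω : Ω) : ℝ → ℝ → ℝ :=
  fun a b =>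
    if a < 1 / 2 ∧ 1 / 2 ≤ b then κ (2 * a) (2 * b - 1) ω
    else if 1 / 2 ≤ a ∧ b < 1 / 2 then κ (2 * b) (2 * a - 1) ω
    else 0


namespace BipProof

open Set

lemma image_affine_integral {a b : ℝ} (ha : a ≠ 0) {T : Set ℝ} (hT : MeasurableSet T)
    (h : ℝ → ℝ) :
    ∫ x in (fun x => a * x + b) '' T, h x = |a| * ∫ x in T, h (a * x + b) := by
  have hderiv : ∀ x ∈ T, HasDerivWithinAt (fun x => a * x + b) a T x := by
    intro x _
    simpa using (((hasDerivAt_id x).const_mul a).add_const b).hasDerivWithinAt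
  have hinj : InjOn (fun x => a * x + b) T := by
    intro x _ y _ hxy
    simp only at hxy
    have : a * x = a * y := by linarith
    exact mul_left_cancel₀ ha this
  rw [integral_image_eq_integral_abs_deriv_smul hT hderiv hinj h]
  simp only [smul_eq_mul]
  exact integral_const_mul _ _

lemma image_affine_integrableOn {a b : ℝ} (ha : a ≠ 0) {T : Set ℝ} (hT : MeasurableSet T)
    {h : ℝ → ℝ} :
    IntegrableOn h ((fun x => a * x + b) '' T) ↔ IntegrableOn (fun x => h (a * x + b)) T := by
  have hderiv : ∀ x ∈ T, HasDerivWithinAt (fun x => a * x + b) a T x := by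
    intro x _
    simpa using (((hasDerivAt_id x).const_mul a).add_const b).hasDerivWithinAt
  have hinj : InjOn (fun x => a * x + b) T := by
    intro x _ y _ hxy
    simp only at hxy
    have : a * x = a * y := by linarith
    exact mul_left_cancel₀ ha this
  rw [integrableOn_image_iff_integrableOn_abs_deriv_smul hT hderiv hinj]
  unfold IntegrableOn
  rw [show (fun x => |a| • h (a * x + b)) = |a| • (fun x => h (a * x + b)) from rfl]
  exact integrable_smul_iff (abs_ne_zero.mpr ha) _


lemma int_d1 {T : Set ℝ} (hT : MeasurableSet T) (h : ℝ → ℝ) :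
    ∫ x in T, h (2 * x) = (1 / 2) * ∫ x in (fun x : ℝ => 2 * x) '' T, h x := by
  have e : (fun x : ℝ => 2 * x) = fun x => 2 * x + 0 := by funext x; ring
  rw [e, image_affine_integral two_ne_zero hT]
  norm_num; ring

lemma int_d2 {T : Set ℝ} (hT : MeasurableSet T) (h : ℝ → ℝ) :
    ∫ x in T, h (2 * x - 1) = (1 / 2) * ∫ x in (fun x : ℝ => 2 * x - 1) '' T, h x := by
  have e : (fun x : ℝ => 2 * x - 1) = fun x => 2 * x + (-1) := by funext x; ring
  rw [e, image_affine_integral two_ne_zero hT]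
  have : ∀ x : ℝ, 2 * x + (-1) = 2 * x - 1 := fun x => by ring
  simp only [this]
  norm_num; ring

lemma intOn_d1 {T : Set ℝ} (hT : MeasurableSet T) {h : ℝ → ℝ} :
    IntegrableOn h ((fun x : ℝ => 2 * x) '' T) ↔ IntegrableOn (fun x => h (2 * x)) T := by
  have e : (fun x : ℝ => 2 * x) = fun x => 2 * x + 0 := by funext x; ring
  rw [e, image_affine_integrableOn two_ne_zero hT]
  simp only [add_zero]

lemma intOn_d2 {T : Set ℝ} (hT : MeasurableSet T) {h : ℝ → ℝ} :
    IntegrableOn h ((fun x : ℝ => 2 * x - 1) '' T) ↔ IntegrableOn (fun x => h (2 * x - 1)) T := by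
  have e : (fun x : ℝ => 2 * x - 1) = fun x => 2 * x + (-1) := by funext x; ring
  rw [e, image_affine_integrableOn two_ne_zero hT]
  have : ∀ x : ℝ, 2 * x + (-1) = 2 * x - 1 := fun x => by ring
  simp only [this]

lemma meas_image_d1 {T : Set ℝ} (hT : MeasurableSet T) :
    MeasurableSet ((fun x : ℝ => 2 * x) '' T) := by
  have : (fun x : ℝ => 2 * x) '' T = (fun y : ℝ => y / 2) ⁻¹' T := by
    rw [Set.image_eq_preimage_of_inverse (g := fun y : ℝ => y / 2)] <;> intro x <;> (show _ = x) <;> ring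
  rw [this]
  exact (measurable_id.div_const 2) hT

lemma meas_image_d2 {T : Set ℝ} (hT : MeasurableSet T) :
    MeasurableSet ((fun x : ℝ => 2 * x - 1) '' T) := by
  have : (fun x : ℝ => 2 * x - 1) '' T = (fun y : ℝ => (y + 1) / 2) ⁻¹' T := by
    rw [Set.image_eq_preimage_of_inverse (g := fun y : ℝ => (y + 1) / 2)] <;> intro x <;> (show _ = x) <;> ring
  rw [this]
  exact ((measurable_id.add_const 1).div_const 2) hT


def cdSet (g : ℝ → ℝ → ℝ) : Set ℝ :=
  { d | ∃ S X : Set ℝ, MeasurableSet S ∧ MeasurableSet X ∧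
    S ⊆ Set.Icc 0 1 ∧ X ⊆ Set.Icc 0 1 ∧
    d = |∫ s in S, (∫ x in X, g s x)| }

noncomputable def cd (g : ℝ → ℝ → ℝ) : ℝ := sSup (cdSet g)

lemma zero_mem_cdSet (g : ℝ → ℝ → ℝ) : (0 : ℝ) ∈ cdSet g :=
  ⟨∅, ∅, MeasurableSet.empty, MeasurableSet.empty, empty_subset _, empty_subset _, by simp⟩

lemma intOn_prod {g : ℝ → ℝ → ℝ}
    (hg : IntegrableOn (fun p : ℝ × ℝ => g p.1 p.2) (Set.Icc 0 1 ×ˢ Set.Icc 0 1))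
    {A B : Set ℝ} (hA : A ⊆ Set.Icc 0 1) (hB : B ⊆ Set.Icc 0 1) :
    Integrable (fun p : ℝ × ℝ => g p.1 p.2) ((volume.restrict A).prod (volume.restrict B)) := by
  rw [Measure.prod_restrict]
  have : IntegrableOn (fun p : ℝ × ℝ => g p.1 p.2) (A ×ˢ B) :=
    hg.mono_set (Set.prod_mono hA hB)
  unfold IntegrableOn at this
  rwa [Measure.volume_eq_prod] at this

/-- universal bound for members of `cdSet g` -/
lemma mem_cdSet_le {g : ℝ → ℝ → ℝ}
    (hg : IntegrableOn (fun p : ℝ × ℝ => g p.1 p.2) (Set.Icc 0 1 ×ˢ Set.Icc 0 1))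
    {d : ℝ} (hd : d ∈ cdSet g) :
    d ≤ ∫ s in Set.Icc (0:ℝ) 1, ∫ x in Set.Icc (0:ℝ) 1, |g s x| := by
  obtain ⟨S, X, mS, mX, sS, sX, rfl⟩ := hd
  have hsq := intOn_prod hg subset_rfl subset_rfl
  have hgabs : Integrable (fun p : ℝ × ℝ => |g p.1 p.2|)
      ((volume.restrict (Set.Icc 0 1)).prod (volume.restrict (Set.Icc 0 1))) := hsq.abs
  have hN : IntegrableOn (fun s => ∫ x in Set.Icc (0:ℝ) 1, |g s x|) (Set.Icc 0 1) :=
    hgabs.integral_prod_left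
  have hH : IntegrableOn (fun s => ∫ x in X, g s x) (Set.Icc 0 1) :=
    (intOn_prod hg subset_rfl sX).integral_prod_left
  have step1 : |∫ s in S, ∫ x in X, g s x| ≤ ∫ s in S, |∫ x in X, g s x| := by
    simpa [Real.norm_eq_abs] using
      norm_integral_le_integral_norm (μ := volume.restrict S) (fun s => ∫ x in X, g s x)
  have step2 : ∫ s in S, |∫ x in X, g s x| ≤ ∫ s in Set.Icc (0:ℝ) 1, |∫ x in X, g s x| := by
    apply setIntegral_mono_set hH.abs
    · exact Filter.Eventually.of_forall fun s => abs_nonneg _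
    · exact HasSubset.Subset.eventuallyLE sS
  have step3 : ∫ s in Set.Icc (0:ℝ) 1, |∫ x in X, g s x|
      ≤ ∫ s in Set.Icc (0:ℝ) 1, ∫ x in Set.Icc (0:ℝ) 1, |g s x| := by
    apply integral_mono_ae hH.abs hN
    filter_upwards [hsq.prod_right_ae] with s hs
    have h1 : |∫ x in X, g s x| ≤ ∫ x in X, |g s x| := by
      simpa [Real.norm_eq_abs] using
        norm_integral_le_integral_norm (μ := volume.restrict X) (fun x => g s x)
    have h2 : ∫ x in X, |g s x| ≤ ∫ x in Set.Icc (0:ℝ) 1, |g s x| := by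
      apply setIntegral_mono_set hs.abs
      · exact Filter.Eventually.of_forall fun x => abs_nonneg _
      · exact HasSubset.Subset.eventuallyLE sX
    linarith
  linarith

lemma bddAbove_cdSet {g : ℝ → ℝ → ℝ}
    (hg : IntegrableOn (fun p : ℝ × ℝ => g p.1 p.2) (Set.Icc 0 1 ×ˢ Set.Icc 0 1)) :
    BddAbove (cdSet g) :=
  ⟨_, fun _ hd => mem_cdSet_le hg hd⟩

lemma cd_nonneg {g : ℝ → ℝ → ℝ} (hbdd : BddAbove (cdSet g)) : 0 ≤ cd g :=
  le_csSup hbdd (zero_mem_cdSet g)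


noncomputable def Bg (g : ℝ → ℝ → ℝ) : ℝ → ℝ → ℝ := fun a b =>
  if a < 1 / 2 ∧ 1 / 2 ≤ b then g (2 * a) (2 * b - 1)
  else if 1 / 2 ≤ a ∧ b < 1 / 2 then g (2 * b) (2 * a - 1)
  else 0

def lo (T : Set ℝ) : Set ℝ := (fun x : ℝ => 2 * x) '' (T ∩ Set.Iio (1 / 2))
def hi (T : Set ℝ) : Set ℝ := (fun x : ℝ => 2 * x - 1) '' (T ∩ Set.Ici (1 / 2))

lemma lo_subset {T : Set ℝ} (hT : T ⊆ Set.Icc 0 1) : lo T ⊆ Set.Icc 0 1 := by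
  rintro y ⟨x, ⟨hxT, hx2⟩, rfl⟩
  obtain ⟨h0, h1⟩ := hT hxT
  have hx : x < 1 / 2 := hx2
  show (2 * x) ∈ Set.Icc (0:ℝ) 1
  constructor <;> linarith

lemma hi_subset {T : Set ℝ} (hT : T ⊆ Set.Icc 0 1) : hi T ⊆ Set.Icc 0 1 := by
  rintro y ⟨x, ⟨hxT, hx2⟩, rfl⟩
  obtain ⟨h0, h1⟩ := hT hxT
  have hx : (1 / 2 : ℝ) ≤ x := hx2
  show (2 * x - 1) ∈ Set.Icc (0:ℝ) 1
  constructor <;> linarith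

lemma integral_Bg (g : ℝ → ℝ → ℝ)
    (hg : IntegrableOn (fun p : ℝ × ℝ => g p.1 p.2) (Set.Icc 0 1 ×ˢ Set.Icc 0 1))
    {S X : Set ℝ} (mS : MeasurableSet S) (mX : MeasurableSet X)
    (sS : S ⊆ Set.Icc 0 1) (sX : X ⊆ Set.Icc 0 1) :
    ∫ s in S, ∫ x in X, Bg g s x
      = (1 / 4) * ((∫ s in lo S, ∫ x in hi X, g s x) + (∫ s in lo X, ∫ x in hi S, g s x)) := by
  have mSlo : MeasurableSet (S ∩ Set.Iio (1 / 2 : ℝ)) := mS.inter measurableSet_Iio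
  have mShi : MeasurableSet (S ∩ Set.Ici (1 / 2 : ℝ)) := mS.inter measurableSet_Ici
  have mXlo : MeasurableSet (X ∩ Set.Iio (1 / 2 : ℝ)) := mX.inter measurableSet_Iio
  have mXhi : MeasurableSet (X ∩ Set.Ici (1 / 2 : ℝ)) := mX.inter measurableSet_Ici
  have sU : lo S ⊆ Set.Icc 0 1 := lo_subset sS
  have sV : hi X ⊆ Set.Icc 0 1 := hi_subset sX
  have sU' : lo X ⊆ Set.Icc 0 1 := lo_subset sX
  have sV' : hi S ⊆ Set.Icc 0 1 := hi_subset sS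
  -- inner integral formulas
  have hF1 : ∀ s ∈ S ∩ Set.Iio (1 / 2 : ℝ),
      (∫ x in X, Bg g s x) = (1 / 2) * ∫ t in hi X, g (2 * s) t := by
    intro s hs
    have hslt : s < 1 / 2 := hs.2
    have hBeq : ∀ x, Bg g s x
        = Set.indicator (Set.Ici (1 / 2 : ℝ)) (fun x => g (2 * s) (2 * x - 1)) x := by
      intro x
      unfold Bg
      by_cases hx : (1 / 2 : ℝ) ≤ x
      · rw [if_pos ⟨hslt, hx⟩]
        exact (Set.indicator_of_mem (show x ∈ Set.Ici (1/2:ℝ) from hx)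
          (fun x => g (2 * s) (2 * x - 1))).symm
      · rw [if_neg (fun h => hx h.2), if_neg (fun h => absurd h.1 hslt.not_ge)]
        exact (Set.indicator_of_notMem (show x ∉ Set.Ici (1/2:ℝ) from hx)
          (fun x => g (2 * s) (2 * x - 1))).symm
    simp only [hBeq]
    rw [setIntegral_indicator measurableSet_Ici]
    exact int_d2 mXhi (fun t => g (2 * s) t)
  have hF2 : ∀ s ∈ S ∩ Set.Ici (1 / 2 : ℝ),
      (∫ x in X, Bg g s x) = (1 / 2) * ∫ t in lo X, g t (2 * s - 1) := by
    intro s hs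
    have hsge : (1 / 2 : ℝ) ≤ s := hs.2
    have hBeq : ∀ x, Bg g s x
        = Set.indicator (Set.Iio (1 / 2 : ℝ)) (fun x => g (2 * x) (2 * s - 1)) x := by
      intro x
      unfold Bg
      by_cases hx : x < (1 / 2 : ℝ)
      · rw [if_neg (fun h => absurd h.1 hsge.not_gt), if_pos ⟨hsge, hx⟩]
        exact (Set.indicator_of_mem (show x ∈ Set.Iio (1/2:ℝ) from hx)
          (fun x => g (2 * x) (2 * s - 1))).symm
      · rw [if_neg (fun h => absurd h.1 hsge.not_gt), if_neg (fun h => hx h.2)]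
        exact (Set.indicator_of_notMem (show x ∉ Set.Iio (1/2:ℝ) from hx)
          (fun x => g (2 * x) (2 * s - 1))).symm
    simp only [hBeq]
    rw [setIntegral_indicator measurableSet_Iio]
    exact int_d1 mXlo (fun t => g t (2 * s - 1))
  -- integrability
  have hG1 : IntegrableOn (fun u => ∫ t in hi X, g u t) (Set.Icc 0 1) :=
    (intOn_prod hg subset_rfl sV).integral_prod_left
  have hG2 : IntegrableOn (fun v => ∫ t in lo X, g t v) (Set.Icc 0 1) :=
    (intOn_prod hg sU' subset_rfl).integral_prod_right
  have hI1 : IntegrableOn (fun s => ∫ x in X, Bg g s x) (S ∩ Set.Iio (1 / 2 : ℝ)) := by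
    apply IntegrableOn.congr_fun ?_ (fun s hs => (hF1 s hs).symm) mSlo
    have h2 : IntegrableOn (fun u => ∫ t in hi X, g u t)
        ((fun x : ℝ => 2 * x) '' (S ∩ Set.Iio (1 / 2 : ℝ))) := hG1.mono_set sU
    have h1 := (intOn_d1 (h := fun u => ∫ t in hi X, g u t) mSlo).mp h2
    exact h1.const_mul _
  have hI2 : IntegrableOn (fun s => ∫ x in X, Bg g s x) (S ∩ Set.Ici (1 / 2 : ℝ)) := by
    apply IntegrableOn.congr_fun ?_ (fun s hs => (hF2 s hs).symm) mShi
    have h2 : IntegrableOn (fun v => ∫ t in lo X, g t v)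
        ((fun x : ℝ => 2 * x - 1) '' (S ∩ Set.Ici (1 / 2 : ℝ))) := hG2.mono_set sV'
    have h1 := (intOn_d2 (h := fun v => ∫ t in lo X, g t v) mShi).mp h2
    exact h1.const_mul _
  -- split
  have hdisj : Disjoint (S ∩ Set.Iio (1 / 2 : ℝ)) (S ∩ Set.Ici (1 / 2 : ℝ)) :=
    Disjoint.mono Set.inter_subset_right Set.inter_subset_right (Set.Iio_disjoint_Ici le_rfl)
  have hsplit : ∫ s in S, ∫ x in X, Bg g s x
      = (∫ s in S ∩ Set.Iio (1 / 2 : ℝ), ∫ x in X, Bg g s x)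
        + (∫ s in S ∩ Set.Ici (1 / 2 : ℝ), ∫ x in X, Bg g s x) := by
    have hun : S ∩ Set.Iio (1 / 2 : ℝ) ∪ S ∩ Set.Ici (1 / 2 : ℝ) = S := by
      rw [← Set.inter_union_distrib_left, Set.Iio_union_Ici, Set.inter_univ]
    rw [← setIntegral_union hdisj mShi hI1 hI2, hun]
  -- piece 1
  have hp1 : ∫ s in S ∩ Set.Iio (1 / 2 : ℝ), ∫ x in X, Bg g s x
      = (1 / 4) * ∫ u in lo S, ∫ t in hi X, g u t := by
    have e1 : ∫ s in S ∩ Set.Iio (1 / 2 : ℝ), ∫ x in X, Bg g s x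
        = ∫ s in S ∩ Set.Iio (1 / 2 : ℝ), (1 / 2) * ∫ t in hi X, g (2 * s) t :=
      setIntegral_congr_fun mSlo hF1
    have h' : ∫ s in S ∩ Set.Iio (1 / 2 : ℝ), ∫ t in hi X, g (2 * s) t
        = (1 / 2) * ∫ u in lo S, ∫ t in hi X, g u t :=
      int_d1 mSlo (fun u => ∫ t in hi X, g u t)
    rw [e1, integral_const_mul, h']
    ring
  -- piece 2
  have hp2 : ∫ s in S ∩ Set.Ici (1 / 2 : ℝ), ∫ x in X, Bg g s x
      = (1 / 4) * ∫ t in lo X, ∫ v in hi S, g t v := by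
    have e1 : ∫ s in S ∩ Set.Ici (1 / 2 : ℝ), ∫ x in X, Bg g s x
        = ∫ s in S ∩ Set.Ici (1 / 2 : ℝ), (1 / 2) * ∫ t in lo X, g t (2 * s - 1) :=
      setIntegral_congr_fun mShi hF2
    have h' : ∫ s in S ∩ Set.Ici (1 / 2 : ℝ), ∫ t in lo X, g t (2 * s - 1)
        = (1 / 2) * ∫ v in hi S, ∫ t in lo X, g t v :=
      int_d2 mShi (fun v => ∫ t in lo X, g t v)
    have hswap : ∫ v in hi S, ∫ t in lo X, g t v = ∫ t in lo X, ∫ v in hi S, g t v := by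
      have hint : Integrable (Function.uncurry (fun v t => g t v))
          ((volume.restrict (hi S)).prod (volume.restrict (lo X))) :=
        (intOn_prod hg sU' sV').swap
      exact integral_integral_swap hint
    rw [e1, integral_const_mul, h', hswap]
    ring
  rw [hsplit, hp1, hp2]
  ring


lemma meas_lo {T : Set ℝ} (hT : MeasurableSet T) : MeasurableSet (lo T) :=
  meas_image_d1 (hT.inter measurableSet_Iio)

lemma meas_hi {T : Set ℝ} (hT : MeasurableSet T) : MeasurableSet (hi T) :=
  meas_image_d2 (hT.inter measurableSet_Ici)

lemma cdSet_Bg_le {g : ℝ → ℝ → ℝ}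
    (hg : IntegrableOn (fun p : ℝ × ℝ => g p.1 p.2) (Set.Icc 0 1 ×ˢ Set.Icc 0 1)) :
    ∀ d ∈ cdSet (Bg g), d ≤ (1 / 2) * cd g := by
  rintro d ⟨S, X, mS, mX, sS, sX, rfl⟩
  rw [integral_Bg g hg mS mX sS sX]
  have h1 : |∫ s in lo S, ∫ x in hi X, g s x| ≤ cd g :=
    le_csSup (bddAbove_cdSet hg)
      ⟨lo S, hi X, meas_lo mS, meas_hi mX, lo_subset sS, hi_subset sX, rfl⟩
  have h2 : |∫ s in lo X, ∫ x in hi S, g s x| ≤ cd g :=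
    le_csSup (bddAbove_cdSet hg)
      ⟨lo X, hi S, meas_lo mX, meas_hi mS, lo_subset sX, hi_subset sS, rfl⟩
  have habs : |(1 / 4 : ℝ) * ((∫ s in lo S, ∫ x in hi X, g s x)
      + (∫ s in lo X, ∫ x in hi S, g s x))|
      ≤ (1 / 4) * (|∫ s in lo S, ∫ x in hi X, g s x| + |∫ s in lo X, ∫ x in hi S, g s x|) := by
    rw [abs_mul]
    have := abs_add_le (∫ s in lo S, ∫ x in hi X, g s x) (∫ s in lo X, ∫ x in hi S, g s x)
    have h4 : |(1 / 4 : ℝ)| = 1 / 4 := by norm_num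
    rw [h4]
    nlinarith [abs_nonneg ((∫ s in lo S, ∫ x in hi X, g s x)
      + (∫ s in lo X, ∫ x in hi S, g s x))]
  linarith

lemma bddAbove_cdSet_Bg {g : ℝ → ℝ → ℝ}
    (hg : IntegrableOn (fun p : ℝ × ℝ => g p.1 p.2) (Set.Icc 0 1 ×ˢ Set.Icc 0 1)) :
    BddAbove (cdSet (Bg g)) :=
  ⟨(1 / 2) * cd g, fun _ hd => cdSet_Bg_le hg _ hd⟩

lemma cd_le_two_mul {g : ℝ → ℝ → ℝ}
    (hg : IntegrableOn (fun p : ℝ × ℝ => g p.1 p.2) (Set.Icc 0 1 ×ˢ Set.Icc 0 1)) :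
    ∀ d ∈ cdSet g, d ≤ 2 * cd (Bg g) := by
  rintro d ⟨U, V, mU, mV, sU, sV, rfl⟩
  set U₀ := U ∩ Set.Iio (1 : ℝ) with hU₀def
  have mU₀ : MeasurableSet U₀ := mU.inter measurableSet_Iio
  have sU₀ : U₀ ⊆ Set.Icc 0 1 := fun x hx => sU hx.1
  have haeU : U =ᵐ[volume] U₀ := by
    rw [ae_eq_set]
    constructor
    · have hsub : U \ U₀ ⊆ {(1 : ℝ)} := by
        rintro x ⟨hxU, hxn⟩
        have h1 : x ≤ 1 := (sU hxU).2
        have h2 : ¬ x < 1 := fun h => hxn ⟨hxU, h⟩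
        simp [le_antisymm h1 (not_lt.mp h2)]
      exact measure_mono_null hsub Real.volume_singleton
    · have : U₀ \ U = ∅ := Set.diff_eq_empty.mpr Set.inter_subset_left
      rw [this]; exact measure_empty
  have hIeq : ∫ s in U, ∫ x in V, g s x = ∫ s in U₀, ∫ x in V, g s x :=
    setIntegral_congr_set haeU
  set S : Set ℝ := (fun x : ℝ => 2 * x) ⁻¹' U₀ ∪ (fun x : ℝ => 2 * x - 1) ⁻¹' V with hSdef
  have mS : MeasurableSet S :=
    ((measurable_id.const_mul 2) mU₀).union (((measurable_id.const_mul 2).sub_const 1) mV)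
  have sS : S ⊆ Set.Icc 0 1 := by
    rintro x (hx | hx)
    · have h1 : (0:ℝ) ≤ 2 * x ∧ 2 * x ≤ 1 := sU₀ hx
      exact ⟨by linarith [h1.1], by linarith [h1.2]⟩
    · have h1 : (0:ℝ) ≤ 2 * x - 1 ∧ 2 * x - 1 ≤ 1 := sV hx
      exact ⟨by linarith [h1.1], by linarith [h1.2]⟩
  have hSlo : S ∩ Set.Iio (1 / 2 : ℝ) = (fun x : ℝ => 2 * x) ⁻¹' U₀ := by
    ext x
    simp only [hSdef, Set.mem_inter_iff, Set.mem_union, Set.mem_preimage, Set.mem_Iio]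
    constructor
    · rintro ⟨hx | hx, hlt⟩
      · exact hx
      · exfalso; have := (sV hx).1; linarith
    · intro hx
      have h2 : (2 : ℝ) * x < 1 := hx.2
      exact ⟨Or.inl hx, by linarith⟩
  have hShi : S ∩ Set.Ici (1 / 2 : ℝ) = (fun x : ℝ => 2 * x - 1) ⁻¹' V := by
    ext x
    simp only [hSdef, Set.mem_inter_iff, Set.mem_union, Set.mem_preimage, Set.mem_Ici]
    constructor
    · rintro ⟨hx | hx, hge⟩
      · exfalso; have h2 : (2 : ℝ) * x < 1 := hx.2; linarith
      · exact hx
    · intro hx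
      have := (sV hx).1
      exact ⟨Or.inr hx, by linarith⟩
  have hloS : lo S = U₀ := by
    unfold lo
    rw [hSlo]
    exact Set.image_preimage_eq _ (fun y => ⟨y / 2, by ring⟩)
  have hhiS : hi S = V := by
    unfold hi
    rw [hShi]
    exact Set.image_preimage_eq _ (fun y => ⟨(y + 1) / 2, by ring⟩)
  have hcomp := integral_Bg g hg mS mS sS sS
  rw [hloS, hhiS] at hcomp
  have hmem : |∫ s in S, ∫ x in S, Bg g s x| ∈ cdSet (Bg g) := ⟨S, S, mS, mS, sS, sS, rfl⟩
  have hle : |∫ s in S, ∫ x in S, Bg g s x| ≤ cd (Bg g) :=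
    le_csSup (bddAbove_cdSet_Bg hg) hmem
  have hI0 : ∫ s in U₀, ∫ x in V, g s x = 2 * ∫ s in S, ∫ x in S, Bg g s x := by
    rw [hcomp]; ring
  calc |∫ s in U, ∫ x in V, g s x| = |(2:ℝ) * ∫ s in S, ∫ x in S, Bg g s x| := by
        rw [hIeq, hI0]
    _ = 2 * |∫ s in S, ∫ x in S, Bg g s x| := by rw [abs_mul]; norm_num
    _ ≤ 2 * cd (Bg g) := by linarith

lemma cd_eq_two_mul_cd_Bg {g : ℝ → ℝ → ℝ}
    (hg : IntegrableOn (fun p : ℝ × ℝ => g p.1 p.2) (Set.Icc 0 1 ×ˢ Set.Icc 0 1)) :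
    cd g = 2 * cd (Bg g) := by
  have hBg0 : (0 : ℝ) ≤ cd (Bg g) := le_csSup (bddAbove_cdSet_Bg hg) (zero_mem_cdSet _)
  have hg0 : (0 : ℝ) ≤ cd g := le_csSup (bddAbove_cdSet hg) (zero_mem_cdSet _)
  apply le_antisymm
  · exact Real.sSup_le (cd_le_two_mul hg) (by linarith)
  · have h1 : cd (Bg g) ≤ 1 / 2 * cd g := Real.sSup_le (cdSet_Bg_le hg) (by linarith)
    linarith


end BipProof

open BipProof in
/-- Lemma (bipartite representation of the cut distance):
`D_⧠(κ, κ') = 2 · max_{ω ∈ Ω} D_⧠(κ^(ω), κ'^(ω))`. -/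
theorem cutFK_eq_two_mul_sup_bip {Ω : Type*} [Fintype Ω] [Nonempty Ω]
    (κ κ' : ℝ → ℝ → Ω → ℝ)
    (hκ : ∀ ω, IntegrableOn (fun p : ℝ × ℝ => κ p.1 p.2 ω) (Set.Icc 0 1 ×ˢ Set.Icc 0 1))
    (hκ' : ∀ ω, IntegrableOn (fun p : ℝ × ℝ => κ' p.1 p.2 ω) (Set.Icc 0 1 ×ˢ Set.Icc 0 1)) :
    cutFK κ κ' = 2 * ⨆ ω : Ω, cutFKR (bip κ ω) (bip κ' ω) := by
  classical
  set f : Ω → ℝ → ℝ → ℝ := fun ω s x => κ s x ω - κ' s x ω with hfdef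
  have hfint : ∀ ω, IntegrableOn (fun p : ℝ × ℝ => f ω p.1 p.2)
      (Set.Icc 0 1 ×ˢ Set.Icc 0 1) := fun ω => (hκ ω).sub (hκ' ω)
  -- step 1 : rewrite cutFK as sSup of a union
  have h1 : cutFK κ κ' = sSup (⋃ ω : Ω, cdSet (f ω)) := by
    rw [cutFK]
    congr 1
    ext d
    simp only [Set.mem_setOf_eq, Set.mem_iUnion, cdSet]
    constructor
    · rintro ⟨S, X, m1, m2, s1, s2, ω, h5⟩
      exact ⟨ω, S, X, m1, m2, s1, s2, h5⟩
    · rintro ⟨ω, S, X, m1, m2, s1, s2, h5⟩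
      exact ⟨S, X, m1, m2, s1, s2, ω, h5⟩
  -- step 2 : sSup of union is iSup of cd
  have hbdd : BddAbove (⋃ ω : Ω, cdSet (f ω)) := by
    refine ⟨⨆ ω : Ω, cd (f ω), ?_⟩
    rintro d hd
    rw [Set.mem_iUnion] at hd
    obtain ⟨ω', hd⟩ := hd
    exact (le_csSup (bddAbove_cdSet (hfint ω')) hd).trans
      (le_ciSup (f := fun ω => cd (f ω)) (Set.finite_range _).bddAbove ω')
  have hsup : sSup (⋃ ω : Ω, cdSet (f ω)) = ⨆ ω : Ω, cd (f ω) := by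
    apply le_antisymm
    · apply Real.sSup_le
      · rintro d hd
        rw [Set.mem_iUnion] at hd
        obtain ⟨ω, hdω⟩ := hd
        exact (le_csSup (bddAbove_cdSet (hfint ω)) hdω).trans
          (le_ciSup (f := fun ω => cd (f ω)) (Set.finite_range _).bddAbove ω)
      · obtain ⟨ω⟩ := ‹Nonempty Ω›
        exact (le_csSup (bddAbove_cdSet (hfint ω)) (zero_mem_cdSet _)).trans
          (le_ciSup (f := fun ω => cd (f ω)) (Set.finite_range _).bddAbove ω)
    · apply ciSup_le
      intro ω
      exact csSup_le_csSup hbdd ⟨0, zero_mem_cdSet _⟩ (Set.subset_iUnion (fun ω => cdSet (f ω)) ω)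
  -- step 3 : identify cutFKR with cd ∘ Bg
  have hbip : ∀ ω s x, bip κ ω s x - bip κ' ω s x = Bg (f ω) s x := by
    intro ω s x
    unfold bip Bg
    split_ifs <;> simp [hfdef]
  have h2 : ∀ ω, cutFKR (bip κ ω) (bip κ' ω) = cd (Bg (f ω)) := by
    intro ω
    rw [cutFKR, cd]
    congr 1
    ext d
    simp only [cdSet, Set.mem_setOf_eq, hbip]
  have h3 : ∀ ω, cd (f ω) = 2 * cutFKR (bip κ ω) (bip κ' ω) := by
    intro ω
    rw [h2 ω]
    exact cd_eq_two_mul_cd_Bg (hfint ω)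
  rw [h1, hsup, iSup_congr h3]
  exact (Real.mul_iSup_of_nonneg (by norm_num) _).symm
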